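/- arXiv:2505.04546 — 3 statements merged into one kernel-verified Lean document; each statement's English description precedes it below -/
import Mathlib

section
/- In the setting of the avoidance recursion V_kʲ on a finite state space with finite action sets, for each k ∈ ℕ and j ∈ E there exists a Markov strategy pair (π, σ) such that the probability of not visiting j within k steps starting from i equals V_kʲ(i) for every i ∈ E. Consequently inf over all strategy pairs of P_i^{π,σ}(τ_j ≤ k) equals 1 − V_kʲ(i). -/
/-- The avoidance value iteration `V_kʲ`. -/
noncomputable def Vav {E α β : Type*} [Fintype E] [DecidableEq E]
    (P : E → α → β → E → ℝ) (A : E → Finset α) (B : E → Finset β)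
    (hA : ∀ i, (A i).Nonempty) (hB : ∀ i, (B i).Nonempty) (j : E) : ℕ → E → ℝ
  | 0, _ => 1
  | k+1, i => ((A i) ×ˢ (B i)).sup' ((hA i).product (hB i))
      fun ab => ∑ i₁ ∈ Finset.univ.erase j, P i ab.1 ab.2 i₁ * Vav P A B hA hB j k i₁

/-- A randomized history-dependent strategy for player 1: given the history of
(state, action, action) triples and the current state, a probability distribution
supported on the admissible actions `A i`. -/
def IsStrat1 {E α β : Type*} (A : E → Finset α) (π : List (E × α × β) → E → α → ℝ) : Prop :=
  ∀ hist i, (∀ a, 0 ≤ π hist i a) ∧ (∑ a ∈ A i, π hist i a = 1) ∧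
    ∀ a, a ∉ A i → π hist i a = 0

/-- A randomized history-dependent strategy for player 2. -/
def IsStrat2 {E α β : Type*} (B : E → Finset β) (σ : List (E × α × β) → E → β → ℝ) : Prop :=
  ∀ hist i, (∀ b, 0 ≤ σ hist i b) ∧ (∑ b ∈ B i, σ hist i b = 1) ∧
    ∀ b, b ∉ B i → σ hist i b = 0

/-- `avoidQ P A B j π σ k hist i` is the probability, under the strategy pair `(π, σ)`
with accumulated history `hist` and current state `i`, that the chain does not visit `j`
during the next `k` steps; so `P_i^{π,σ}(τ_j ≤ k) = 1 - avoidQ P A B j π σ k [] i`. -/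
noncomputable def avoidQ {E α β : Type*} [Fintype E] [DecidableEq E]
    (P : E → α → β → E → ℝ) (A : E → Finset α) (B : E → Finset β) (j : E)
    (π : List (E × α × β) → E → α → ℝ) (σ : List (E × α × β) → E → β → ℝ) :
    ℕ → List (E × α × β) → E → ℝ
  | 0, _, _ => 1
  | k+1, hist, i => ∑ a ∈ A i, ∑ b ∈ B i, π hist i a * σ hist i b *
      ∑ i₁ ∈ Finset.univ.erase j, P i a b i₁ * avoidQ P A B j π σ k (hist ++ [(i, a, b)]) i₁


section Aux

variable {E α β : Type*} [Fintype E] [DecidableEq E]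
  (P : E → α → β → E → ℝ) (A : E → Finset α) (B : E → Finset β)
  (hA : ∀ i, (A i).Nonempty) (hB : ∀ i, (B i).Nonempty) (j : E)

lemma Vav_succ (k : ℕ) (i : E) :
    Vav P A B hA hB j (k+1) i = ((A i) ×ˢ (B i)).sup' ((hA i).product (hB i))
      (fun ab => ∑ i₁ ∈ Finset.univ.erase j,
        P i ab.1 ab.2 i₁ * Vav P A B hA hB j k i₁) := rfl

lemma avoidQ_succ (π : List (E × α × β) → E → α → ℝ) (σ : List (E × α × β) → E → β → ℝ)
    (k : ℕ) (hist : List (E × α × β)) (i : E) :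
    avoidQ P A B j π σ (k+1) hist i =
      ∑ a ∈ A i, ∑ b ∈ B i, π hist i a * σ hist i b *
        ∑ i₁ ∈ Finset.univ.erase j,
          P i a b i₁ * avoidQ P A B j π σ k (hist ++ [(i, a, b)]) i₁ := rfl

lemma avoidQ_le_Vav (hPnn : ∀ i a b s, 0 ≤ P i a b s)
    (π : List (E × α × β) → E → α → ℝ) (σ : List (E × α × β) → E → β → ℝ)
    (hπ : IsStrat1 A π) (hσ : IsStrat2 B σ) :
    ∀ k hist i, avoidQ P A B j π σ k hist i ≤ Vav P A B hA hB j k i := by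
  intro k
  induction k with
  | zero => intro hist i; simp [avoidQ, Vav]
  | succ k ih =>
    intro hist i
    rw [avoidQ_succ, Vav_succ]
    set V := (((A i) ×ˢ (B i)).sup' ((hA i).product (hB i))
      (fun ab => ∑ i₁ ∈ Finset.univ.erase j,
        P i ab.1 ab.2 i₁ * Vav P A B hA hB j k i₁)) with hV
    have hS : ∀ a ∈ A i, ∀ b ∈ B i,
        (∑ i₁ ∈ Finset.univ.erase j,
          P i a b i₁ * avoidQ P A B j π σ k (hist ++ [(i, a, b)]) i₁) ≤ V := by
      intro a ha b hb
      calc (∑ i₁ ∈ Finset.univ.erase j,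
            P i a b i₁ * avoidQ P A B j π σ k (hist ++ [(i, a, b)]) i₁)
          ≤ ∑ i₁ ∈ Finset.univ.erase j, P i a b i₁ * Vav P A B hA hB j k i₁ :=
            Finset.sum_le_sum fun i₁ _ =>
              mul_le_mul_of_nonneg_left (ih _ i₁) (hPnn _ _ _ _)
        _ ≤ V := by
            have hmem : (a, b) ∈ (A i) ×ˢ (B i) := Finset.mem_product.2 ⟨ha, hb⟩
            exact Finset.le_sup' (fun ab : α × β => ∑ i₁ ∈ Finset.univ.erase j,
              P i ab.1 ab.2 i₁ * Vav P A B hA hB j k i₁) hmem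
    calc (∑ a ∈ A i, ∑ b ∈ B i, π hist i a * σ hist i b *
          ∑ i₁ ∈ Finset.univ.erase j,
            P i a b i₁ * avoidQ P A B j π σ k (hist ++ [(i, a, b)]) i₁)
        ≤ ∑ a ∈ A i, ∑ b ∈ B i, π hist i a * σ hist i b * V := by
          refine Finset.sum_le_sum fun a ha => Finset.sum_le_sum fun b hb => ?_
          exact mul_le_mul_of_nonneg_left (hS a ha b hb)
            (mul_nonneg ((hπ hist i).1 a) ((hσ hist i).1 b))
      _ = V := by
          have h1 := (hπ hist i).2.1
          have h2 := (hσ hist i).2.1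
          calc (∑ a ∈ A i, ∑ b ∈ B i, π hist i a * σ hist i b * V)
              = ((∑ a ∈ A i, π hist i a) * (∑ b ∈ B i, σ hist i b)) * V := by
                rw [Finset.sum_mul_sum, Finset.sum_mul]
                exact Finset.sum_congr rfl fun a _ => by rw [Finset.sum_mul]
            _ = V := by rw [h1, h2]; ring

end Aux

/-- for each `k` and `j` there is a Markov strategy pair (here deterministic
Markov, embedded as history-dependent strategies via the history length) whose avoidance
probability equals `V_kʲ(i)` for every `i`; consequently the infimum over all strategy
pairs of `P_i^{π,σ}(τ_j ≤ k)` equals `1 − V_kʲ(i)`. -/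
theorem stmt_7 {E α β : Type*} [Fintype E] [DecidableEq E] [DecidableEq α] [DecidableEq β]
    (P : E → α → β → E → ℝ) (A : E → Finset α) (B : E → Finset β)
    (hA : ∀ i, (A i).Nonempty) (hB : ∀ i, (B i).Nonempty)
    (hPnn : ∀ i a b s, 0 ≤ P i a b s) (hPsum : ∀ i a b, ∑ s, P i a b s = 1)
    (k : ℕ) (j : E) :
    ∃ (f : ℕ → E → α) (g : ℕ → E → β),
      (∀ n i, f n i ∈ A i ∧ g n i ∈ B i) ∧
      (∀ i, avoidQ P A B j
          (fun hist i' a => if a = f hist.length i' then 1 else 0)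
          (fun hist i' b => if b = g hist.length i' then 1 else 0) k [] i
        = Vav P A B hA hB j k i) ∧
      (∀ i, IsGLB {x : ℝ | ∃ (π : List (E × α × β) → E → α → ℝ)
            (σ : List (E × α × β) → E → β → ℝ), IsStrat1 A π ∧ IsStrat2 B σ ∧
            x = 1 - avoidQ P A B j π σ k [] i}
          (1 - Vav P A B hA hB j k i)) := by
  classical
  -- choice of maximizers for each horizon
  have hchoice : ∀ (i : E) (m : ℕ), ∃ ab : α × β, ab.1 ∈ A i ∧ ab.2 ∈ B i ∧
      Vav P A B hA hB j (m+1) i = ∑ i₁ ∈ Finset.univ.erase j,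
        P i ab.1 ab.2 i₁ * Vav P A B hA hB j m i₁ := by
    intro i m
    obtain ⟨ab, hab, heq⟩ := Finset.exists_mem_eq_sup' ((hA i).product (hB i))
      (fun ab : α × β => ∑ i₁ ∈ Finset.univ.erase j,
        P i ab.1 ab.2 i₁ * Vav P A B hA hB j m i₁)
    obtain ⟨h1, h2⟩ := Finset.mem_product.1 hab
    exact ⟨ab, h1, h2, by rw [Vav_succ]; exact heq⟩
  set c : E → ℕ → α × β := fun i m => (hchoice i m).choose with hc
  have hcP : ∀ i m, (c i m).1 ∈ A i ∧ (c i m).2 ∈ B i ∧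
      Vav P A B hA hB j (m+1) i = ∑ i₁ ∈ Finset.univ.erase j,
        P i (c i m).1 (c i m).2 i₁ * Vav P A B hA hB j m i₁ :=
    fun i m => (hchoice i m).choose_spec
  set f : ℕ → E → α := fun n i => if n < k then (c i (k - n - 1)).1 else (hA i).choose
  set g : ℕ → E → β := fun n i => if n < k then (c i (k - n - 1)).2 else (hB i).choose
  have hfg : ∀ n i, f n i ∈ A i ∧ g n i ∈ B i := by
    intro n i
    by_cases h : n < k
    · exact ⟨by simp only [f, if_pos h]; exact (hcP i _).1,
        by simp only [g, if_pos h]; exact (hcP i _).2.1⟩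
    · exact ⟨by simp only [f, if_neg h]; exact (hA i).choose_spec,
        by simp only [g, if_neg h]; exact (hB i).choose_spec⟩
  set π : List (E × α × β) → E → α → ℝ :=
    fun hist i' a => if a = f hist.length i' then 1 else 0 with hπdef
  set σ : List (E × α × β) → E → β → ℝ :=
    fun hist i' b => if b = g hist.length i' then 1 else 0 with hσdef
  have hπ : IsStrat1 A π := by
    intro hist i
    refine ⟨fun a => by simp only [π]; positivity, ?_, ?_⟩
    · simp only [π, Finset.sum_ite_eq', if_pos (hfg hist.length i).1]
    · intro a ha
      simp only [π, ite_eq_right_iff]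
      intro hEq; exact absurd ((hEq ▸ (hfg hist.length i).1)) ha
  have hσ : IsStrat2 B σ := by
    intro hist i
    refine ⟨fun b => by simp only [σ]; positivity, ?_, ?_⟩
    · simp only [σ, Finset.sum_ite_eq', if_pos (hfg hist.length i).2]
    · intro b hb
      simp only [σ, ite_eq_right_iff]
      intro hEq; exact absurd ((hEq ▸ (hfg hist.length i).2)) hb
  -- attainment
  have hattain : ∀ m, m ≤ k → ∀ hist : List (E × α × β), hist.length = k - m →
      ∀ i, avoidQ P A B j π σ m hist i = Vav P A B hA hB j m i := by
    intro m
    induction m with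
    | zero => intro _ _ _ i; simp [avoidQ, Vav]
    | succ m ih =>
      intro hm hist hlen i
      have hlt : hist.length < k := by omega
      have hidx : k - hist.length - 1 = m := by omega
      have hf : f hist.length i = (c i m).1 := by
        simp only [f, if_pos hlt, hidx]
      have hg : g hist.length i = (c i m).2 := by
        simp only [g, if_pos hlt, hidx]
      rw [avoidQ_succ]
      have collapse : ∀ (S : α → β → ℝ),
          (∑ a ∈ A i, ∑ b ∈ B i, π hist i a * σ hist i b * S a b)
            = S (c i m).1 (c i m).2 := by
        intro S
        have : ∀ a ∈ A i, (∑ b ∈ B i, π hist i a * σ hist i b * S a b)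
            = if a = (c i m).1 then S a (c i m).2 else 0 := by
          intro a _
          simp only [π, σ, hf, hg, ite_mul, one_mul, zero_mul, mul_ite, mul_one, mul_zero]
          by_cases h : a = (c i m).1
          · simp [h, Finset.sum_ite_eq', (hcP i m).2.1]
          · simp [h]
        rw [Finset.sum_congr rfl this, Finset.sum_ite_eq', if_pos (hcP i m).1]
      rw [collapse]
      have hlen' : (hist ++ [(i, (c i m).1, (c i m).2)]).length = k - m := by
        simp [hlen]; omega
      have := (hcP i m).2.2
      rw [this]
      refine Finset.sum_congr rfl fun i₁ _ => ?_
      rw [ih (by omega) _ hlen' i₁]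
  refine ⟨f, g, hfg, fun i => hattain k le_rfl [] (by simp) i, fun i => ?_⟩
  constructor
  · rintro x ⟨π', σ', hπ', hσ', rfl⟩
    have := avoidQ_le_Vav P A B hA hB j hPnn π' σ' hπ' hσ' k [] i
    linarith
  · intro y hy
    exact hy ⟨π, σ, hπ, hσ, by rw [hattain k le_rfl [] (by simp) i]⟩
end

section
/- Define the irreducibility coefficient γ := min over (i,j) ∈ E² of the infimum over all strategy pairs of P_i^{π,σ}(τ_j ≤ |E|), where τ_j is the first return time to j. Then γ = 1 − max over (i,j) ∈ E² of V_{|E|}ʲ(i), where V_kʲ is the avoidance value iteration V₀ʲ ≡ 1, V_{k+1}ʲ(i) = max_{a∈A(i), b∈B(i)} Σ_{i₁≠j} P(i₁|i,a,b) V_kʲ(i₁). -/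
section aux
variable {E α β : Type*} [Fintype E] [DecidableEq E]
    (P : E → α → β → E → ℝ) (A : E → Finset α) (B : E → Finset β)
    (hA : ∀ i, (A i).Nonempty) (hB : ∀ i, (B i).Nonempty)

theorem avoid_le_Vav (hPnn : ∀ i a b s, 0 ≤ P i a b s) (j : E)
    (π : List (E × α × β) → E → α → ℝ) (σ : List (E × α × β) → E → β → ℝ)
    (hπ : IsStrat1 A π) (hσ : IsStrat2 B σ) :
    ∀ (k : ℕ) (hist : List (E × α × β)) (i : E),
      avoidQ P A B j π σ k hist i ≤ Vav P A B hA hB j k i := by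
  intro k
  induction k with
  | zero => intro hist i; simp [avoidQ, Vav]
  | succ k ih =>
    intro hist i
    rw [avoidQ, Vav]
    set V := ((A i) ×ˢ (B i)).sup' ((hA i).product (hB i))
      (fun ab => ∑ i₁ ∈ Finset.univ.erase j, P i ab.1 ab.2 i₁ * Vav P A B hA hB j k i₁) with hV
    calc (∑ a ∈ A i, ∑ b ∈ B i, π hist i a * σ hist i b *
        ∑ i₁ ∈ Finset.univ.erase j, P i a b i₁ * avoidQ P A B j π σ k (hist ++ [(i, a, b)]) i₁)
        ≤ ∑ a ∈ A i, ∑ b ∈ B i, π hist i a * σ hist i b * V := by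
          refine Finset.sum_le_sum fun a ha => Finset.sum_le_sum fun b hb => ?_
          refine mul_le_mul_of_nonneg_left ?_
            (mul_nonneg ((hπ hist i).1 a) ((hσ hist i).1 b))
          calc (∑ i₁ ∈ Finset.univ.erase j, P i a b i₁ *
                avoidQ P A B j π σ k (hist ++ [(i, a, b)]) i₁)
              ≤ ∑ i₁ ∈ Finset.univ.erase j, P i a b i₁ * Vav P A B hA hB j k i₁ :=
                Finset.sum_le_sum fun i₁ _ =>
                  mul_le_mul_of_nonneg_left (ih _ _) (hPnn i a b i₁)
            _ ≤ V := by
                rw [hV]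
                exact Finset.le_sup'
                  (fun ab => ∑ i₁ ∈ Finset.univ.erase j,
                    P i ab.1 ab.2 i₁ * Vav P A B hA hB j k i₁)
                  (Finset.mk_mem_product ha hb)
      _ = V := by
          have h1 : ∀ a, (∑ b ∈ B i, π hist i a * σ hist i b * V) = π hist i a * V := by
            intro a
            rw [← Finset.sum_mul]
            rw [← Finset.mul_sum, (hσ hist i).2.1, mul_one]
          simp only [h1]
          rw [← Finset.sum_mul, (hπ hist i).2.1, one_mul]

theorem exists_attain (j : E) :
    ∃ (π : List (E × α × β) → E → α → ℝ) (σ : List (E × α × β) → E → β → ℝ),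
      IsStrat1 A π ∧ IsStrat2 B σ ∧
      ∀ (k : ℕ) (hist : List (E × α × β)), hist.length + k = Fintype.card E →
        ∀ i, avoidQ P A B j π σ k hist i = Vav P A B hA hB j k i := by
  classical
  have hm : ∀ (k : ℕ) (i : E), ∃ ab ∈ (A i) ×ˢ (B i),
      Vav P A B hA hB j (k+1) i =
        ∑ i₁ ∈ Finset.univ.erase j, P i ab.1 ab.2 i₁ * Vav P A B hA hB j k i₁ := by
    intro k i
    exact Finset.exists_mem_eq_sup' ((hA i).product (hB i)) _
  choose m hmem hval using hm
  set N := Fintype.card E with hN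
  refine ⟨fun hist i a => if a = (m (N - 1 - hist.length) i).1 then 1 else 0,
          fun hist i b => if b = (m (N - 1 - hist.length) i).2 then 1 else 0, ?_, ?_, ?_⟩
  · intro hist i
    have hmA : (m (N - 1 - hist.length) i).1 ∈ A i :=
      (Finset.mem_product.1 (hmem _ i)).1
    refine ⟨fun a => by positivity, by rw [Finset.sum_ite_eq', if_pos hmA], ?_⟩
    intro a haA
    exact if_neg (fun h : a = (m (N - 1 - hist.length) i).1 => haA (h ▸ hmA))
  · intro hist i
    have hmB : (m (N - 1 - hist.length) i).2 ∈ B i :=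
      (Finset.mem_product.1 (hmem _ i)).2
    refine ⟨fun b => by positivity, by rw [Finset.sum_ite_eq', if_pos hmB], ?_⟩
    intro b hbB
    exact if_neg (fun h : b = (m (N - 1 - hist.length) i).2 => hbB (h ▸ hmB))
  · intro k
    induction k with
    | zero => intro hist _ i; simp [avoidQ, Vav]
    | succ k ih =>
      intro hist hlen i
      have hk : N - 1 - hist.length = k := by omega
      have hmA : (m k i).1 ∈ A i := (Finset.mem_product.1 (hmem k i)).1
      have hmB : (m k i).2 ∈ B i := (Finset.mem_product.1 (hmem k i)).2
      rw [avoidQ]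
      rw [Finset.sum_eq_single (m k i).1]
      · rw [Finset.sum_eq_single (m k i).2]
        · simp only [hk, eq_self_iff_true, if_true, one_mul]
          rw [hval k i]
          refine Finset.sum_congr rfl fun i₁ _ => ?_
          rw [ih (hist ++ [(i, (m k i).1, (m k i).2)]) (by simp; omega) i₁]
        · intro b _ hb
          simp [hk, hb]
        · intro h; exact absurd hmB h
      · intro a _ ha
        simp [hk, ha]
      · intro h; exact absurd hmA h
end aux

/-- the irreducibility coefficient
`γ := min_{(i,j)} inf_{π,σ} P_i^{π,σ}(τ_j ≤ |E|)` (expressed as the greatest lower bound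
over all states and all randomized history-dependent strategy pairs of
`1 - avoidQ ... |E| [] i`) equals `1 − max_{(i,j)} V_{|E|}ʲ(i)`. -/
theorem stmt_10 {E α β : Type*} [Fintype E] [DecidableEq E] [Nonempty E]
    (P : E → α → β → E → ℝ) (A : E → Finset α) (B : E → Finset β)
    (hA : ∀ i, (A i).Nonempty) (hB : ∀ i, (B i).Nonempty)
    (hPnn : ∀ i a b s, 0 ≤ P i a b s) (hPsum : ∀ i a b, ∑ s, P i a b s = 1) :
    IsGLB {x : ℝ | ∃ (i j : E) (π : List (E × α × β) → E → α → ℝ)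
        (σ : List (E × α × β) → E → β → ℝ), IsStrat1 A π ∧ IsStrat2 B σ ∧
        x = 1 - avoidQ P A B j π σ (Fintype.card E) [] i}
      (1 - Finset.univ.sup' Finset.univ_nonempty
        (fun p : E × E => Vav P A B hA hB p.2 (Fintype.card E) p.1)) := by
  constructor
  · rintro x ⟨i, j, π, σ, hπ, hσ, rfl⟩
    have h1 := avoid_le_Vav P A B hA hB hPnn j π σ hπ hσ (Fintype.card E) [] i
    have h2 : Vav P A B hA hB j (Fintype.card E) i ≤
        Finset.univ.sup' Finset.univ_nonempty
          (fun p : E × E => Vav P A B hA hB p.2 (Fintype.card E) p.1) :=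
      Finset.le_sup' (fun p : E × E => Vav P A B hA hB p.2 (Fintype.card E) p.1)
        (Finset.mem_univ (i, j))
    linarith
  · intro y hy
    obtain ⟨p, _, hps⟩ := Finset.exists_mem_eq_sup' Finset.univ_nonempty
      (fun p : E × E => Vav P A B hA hB p.2 (Fintype.card E) p.1)
    obtain ⟨π, σ, hπ, hσ, heq⟩ := exists_attain P A B hA hB p.2
    refine hy ⟨p.1, p.2, π, σ, hπ, hσ, ?_⟩
    rw [heq (Fintype.card E) [] (by simp), ← hps]
end

section
/- Let (X_n, A_n, B_n) be a controlled process on a finite state space under strategies (π, ψ) with ψ stationary, and suppose h* : E → (0, ∞), ρ*, ε, θ with θ > 0 satisfy h*(X_n) ≤ e^{θ(ε−ρ*)} E[e^{θ c(X_n,A_n,B_n)} h*(X_{n+1}) | history up to n] almost surely for all n. Then for all n ≥ 1 and initial state i: e^{nθ(ε−ρ*)} E_i[e^{θ Σ_{k=0}^{n−1} c(X_k,A_k,B_k)} h*(X_n)] ≥ min_j h*(j), and consequently liminf_n (1/(θn)) ln E_i[e^{θ Σ_{k=0}^{n−1} c(X_k,A_k,B_k)}] ≥ ρ* − ε. -/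
/-!
Write `φₙ = e^{θ Sₙ} h*(Xₙ)` with `Sₙ = Σ_{k<n} c(X_k, A_k, B_k)`, so that
`φₙ₊₁ = φₙ / h*(Xₙ) · e^{θ cₙ} h*(Xₙ₊₁)`. Although `φₙ / h*(Xₙ)` need not be `Fₙ`-measurable,
the hypothesis lets us replace `h*(Xₙ)` by the larger, `Fₙ`-measurable `e^{θ(ε−ρ*)} E[· | Fₙ]`;
pulling out what is known gives `E φₙ ≤ e^{θ(ε−ρ*)} E φₙ₊₁`, and iterating from `E φ₀ ≥ min h*`
gives the first claim. Since `h* ≤ max h*`, the same bound holds for `E e^{θ Sₙ}` up to the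
constant `min h* / max h* > 0`, which disappears after `(1/(θn)) log`.
-/

open MeasureTheory Filter Real Finset

theorem integral_le_mul_integral_of_le_mul_condExp {Ω : Type*} {m m0 : MeasurableSpace Ω}
    {μ : Measure Ω} [IsFiniteMeasure μ] [NeZero μ] (hm : m ≤ m0) {φ f h ψ : Ω → ℝ} {C : ℝ}
    (hC : 0 ≤ C) (hφ : StronglyMeasurable[m] φ) (hφ0 : 0 ≤ φ) (hf0 : 0 ≤ f) (hh : ∀ ω, 0 < h ω)
    (hψ : Integrable ψ μ) (hle : ∀ᵐ ω ∂μ, h ω ≤ C * μ[f | m] ω)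
    (hψ_ge : ∀ ω, φ ω / h ω * f ω ≤ ψ ω) :
    ∫ ω, φ ω ∂μ ≤ C * ∫ ω, ψ ω ∂μ := by
  set Y := μ[f | m]
  have hCY : ∀ᵐ ω ∂μ, 0 < C * Y ω := hle.mono fun ω hω => (hh ω).trans_le hω
  have hf : Integrable f μ := by
    by_contra hf
    obtain ⟨ω, hω⟩ := hCY.exists
    simp [Y, condExp_of_not_integrable hf] at hω
  -- `W` is the `m`-measurable stand-in for `φ / h`.
  set W : Ω → ℝ := fun ω => φ ω / (C * Y ω)
  have hW : StronglyMeasurable[m] W :=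
    hφ.div (stronglyMeasurable_const.mul stronglyMeasurable_condExp)
  have hWf_nonneg : ∀ᵐ ω ∂μ, 0 ≤ W ω * f ω :=
    hCY.mono fun ω hω => mul_nonneg (div_nonneg (hφ0 ω) hω.le) (hf0 ω)
  have hWf_le : ∀ᵐ ω ∂μ, W ω * f ω ≤ ψ ω := by
    filter_upwards [hle] with ω hω
    have hW_le : W ω ≤ φ ω / h ω := div_le_div_of_nonneg_left (hφ0 ω) (hh ω) hω
    exact (mul_le_mul_of_nonneg_right hW_le (hf0 ω)).trans (hψ_ge ω)
  have hWf : Integrable (W * f) μ := by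
    refine hψ.mono' ((hW.mono hm).aestronglyMeasurable.mul hf.1) ?_
    filter_upwards [hWf_nonneg, hWf_le] with ω h0 h1
    rwa [Real.norm_eq_abs, Pi.mul_apply, abs_of_nonneg h0]
  have hφ_eq : (fun ω => φ ω) =ᵐ[μ] fun ω => C * (W ω * Y ω) := by
    filter_upwards [hCY] with ω hω
    simp only [W]
    field_simp
    rw [mul_assoc, mul_div_cancel_right₀ _ hω.ne']
  calc ∫ ω, φ ω ∂μ = C * ∫ ω, (W * Y) ω ∂μ := by
        rw [integral_congr_ae hφ_eq, integral_const_mul]; rfl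
    _ = C * ∫ ω, (W * f) ω ∂μ := by
        rw [← integral_condExp hm (f := W * f),
          integral_congr_ae (condExp_mul_of_stronglyMeasurable_left hW hWf hf)]
    _ ≤ C * ∫ ω, ψ ω ∂μ := mul_le_mul_of_nonneg_left (integral_mono_ae hWf hψ hWf_le) hC

theorem le_pow_mul_of_le_mul_succ {u : ℕ → ℝ} {C : ℝ} (hC : 0 ≤ C)
    (h : ∀ n, u n ≤ C * u (n + 1)) (n : ℕ) : u 0 ≤ C ^ n * u n := by
  induction n with
  | zero => simp
  | succ n ih =>
    calc u 0 ≤ C ^ n * u n := ih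
      _ ≤ C ^ n * (C * u (n + 1)) := by gcongr; exact h n
      _ = C ^ (n + 1) * u (n + 1) := by ring

theorem integral_exp_mul_sum_le {Ω : Type*} {m0 : MeasurableSpace Ω} {μ : Measure Ω}
    [IsProbabilityMeasure μ] {g : ℕ → Ω → ℝ} {θ M : ℝ} (hθ : 0 ≤ θ) (hg : ∀ k ω, g k ω ≤ M)
    (n : ℕ) : ∫ ω, exp (θ * ∑ k ∈ range n, g k ω) ∂μ ≤ exp (θ * (n * M)) := by
  have hsum : ∀ ω, ∑ k ∈ range n, g k ω ≤ n * M := fun ω => by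
    simpa using Finset.sum_le_sum fun k (_ : k ∈ range n) => hg k ω
  calc ∫ ω, exp (θ * ∑ k ∈ range n, g k ω) ∂μ ≤ ∫ _, exp (θ * (n * M)) ∂μ :=
        integral_mono_of_nonneg (ae_of_all _ fun _ => (exp_pos _).le) (integrable_const _)
          (ae_of_all _ fun ω => exp_le_exp.2 (mul_le_mul_of_nonneg_left (hsum ω) hθ))
    _ = exp (θ * (n * M)) := by simp

theorem neg_le_liminf_log_div {G : ℕ → ℝ} {θ s K M : ℝ} (hθ : 0 < θ) (hK : 0 < K)
    (hlow : ∀ n : ℕ, K ≤ exp (n * θ * s) * G n) (hup : ∀ n : ℕ, G n ≤ exp (θ * (n * M))) :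
    -s ≤ atTop.liminf (fun n : ℕ => 1 / (θ * n) * log (G n)) := by
  have hG : ∀ n, 0 < G n := fun n =>
    pos_of_mul_pos_right (hK.trans_le (hlow n)) (exp_pos _).le
  have hbelow : ∀ᶠ n : ℕ in atTop, -s + log K / (θ * n) ≤ 1 / (θ * n) * log (G n) := by
    filter_upwards [eventually_gt_atTop 0] with n hn
    have hθn : 0 < θ * n := by positivity
    have hlog : log K + n * θ * (-s) ≤ log (G n) := by
      have := log_le_log hK (hlow n)
      rw [log_mul (exp_pos _).ne' (hG n).ne', log_exp] at this
      linarith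
    rw [one_div_mul_eq_div, le_div_iff₀ hθn, add_mul, div_mul_cancel₀ _ hθn.ne']
    linarith
  have habove : ∀ᶠ n : ℕ in atTop, 1 / (θ * n) * log (G n) ≤ M := by
    filter_upwards [eventually_gt_atTop 0] with n hn
    have hθn : 0 < θ * n := by positivity
    have := log_le_log (hG n) (hup n)
    rw [log_exp] at this
    rw [one_div_mul_eq_div, div_le_iff₀ hθn]
    linarith
  have hlim : Tendsto (fun n : ℕ => -s + log K / (θ * n)) atTop (nhds (-s)) := by
    simpa using (tendsto_const_nhds (x := -s)).add ((tendsto_const_nhds (x := log K)).div_atTop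
      (tendsto_natCast_atTop_atTop.const_mul_atTop hθ))
  rw [← hlim.liminf_eq]
  exact liminf_le_liminf hbelow hlim.isBoundedUnder_ge
    (IsBoundedUnder.isCoboundedUnder_ge ⟨M, by simpa [eventually_map] using habove⟩)

theorem stmt_15_general {E α β Ω : Type*} [Fintype E] [Nonempty E]
    {m0 : MeasurableSpace Ω} (μ : Measure Ω) [IsProbabilityMeasure μ]
    (F : ℕ → MeasurableSpace Ω) (hFle : ∀ n, F n ≤ m0)
    (X : ℕ → Ω → E) (Aa : ℕ → Ω → α) (Bb : ℕ → Ω → β)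
    (c : E → α → β → ℝ) (hcb : ∃ M : ℝ, ∀ i a b, |c i a b| ≤ M)
    (hstar : E → ℝ) (hpos : ∀ i, 0 < hstar i)
    (θ ρstar ε : ℝ) (hθ : 0 < θ)
    (hint : ∀ n, Integrable (fun ω =>
      Real.exp (θ * ∑ k ∈ Finset.range n, c (X k ω) (Aa k ω) (Bb k ω)) * hstar (X n ω)) μ)
    (hint' : ∀ n, Integrable (fun ω =>
      Real.exp (θ * ∑ k ∈ Finset.range n, c (X k ω) (Aa k ω) (Bb k ω))) μ)
    (hadapt : ∀ n, Measurable[F n] (fun ω =>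
      Real.exp (θ * ∑ k ∈ Finset.range n, c (X k ω) (Aa k ω) (Bb k ω)) * hstar (X n ω)))
    (hstep : ∀ n, ∀ᵐ ω ∂μ, hstar (X n ω) ≤ Real.exp (θ * (ε - ρstar)) *
      (μ[(fun ω' => Real.exp (θ * c (X n ω') (Aa n ω') (Bb n ω')) *
          hstar (X (n + 1) ω')) | F n]) ω) :
    (∀ n : ℕ, 1 ≤ n →
      (Finset.univ.inf' Finset.univ_nonempty hstar) ≤
        Real.exp ((n : ℝ) * θ * (ε - ρstar)) *
          ∫ ω, Real.exp (θ * ∑ k ∈ Finset.range n, c (X k ω) (Aa k ω) (Bb k ω)) *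
            hstar (X n ω) ∂μ) ∧
    ρstar - ε ≤ atTop.liminf (fun n : ℕ =>
      (1 / (θ * n)) * Real.log
        (∫ ω, Real.exp (θ * ∑ k ∈ Finset.range n, c (X k ω) (Aa k ω) (Bb k ω)) ∂μ)) := by
  set hmin := univ.inf' univ_nonempty hstar
  set hmax := univ.sup' univ_nonempty hstar
  have hmin_pos : 0 < hmin := (lt_inf'_iff _).2 fun j _ => hpos j
  have hmax_ge : ∀ j, hstar j ≤ hmax := fun j => le_sup' hstar (mem_univ j)
  have hmax_pos : 0 < hmax := (hpos (Classical.arbitrary E)).trans_le (hmax_ge _)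
  set S : ℕ → Ω → ℝ := fun n ω => ∑ k ∈ range n, c (X k ω) (Aa k ω) (Bb k ω)
  set φ : ℕ → Ω → ℝ := fun n ω => exp (θ * S n ω) * hstar (X n ω)
  have hrec : ∀ n, ∫ ω, φ n ω ∂μ ≤ exp (θ * (ε - ρstar)) * ∫ ω, φ (n + 1) ω ∂μ := fun n =>
    integral_le_mul_integral_of_le_mul_condExp (hFle n) (exp_pos _).le
      (hadapt n).stronglyMeasurable (fun ω => (mul_pos (exp_pos _) (hpos _)).le)
      (fun ω => (mul_pos (exp_pos _) (hpos _)).le) (fun ω => hpos _) (hint (n + 1)) (hstep n)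
      fun ω => le_of_eq <| by
        simp only [φ, S, sum_range_succ, mul_add, exp_add]
        field_simp [(hpos (X n ω)).ne']
  have hφ0 : hmin ≤ ∫ ω, φ 0 ω ∂μ := by
    calc hmin = ∫ _, hmin ∂μ := by simp
      _ ≤ ∫ ω, φ 0 ω ∂μ := integral_mono (integrable_const _) (hint 0) fun ω => by
          simpa [φ, S] using inf'_le hstar (mem_univ (X 0 ω))
  have hbound : ∀ n : ℕ, hmin ≤ exp (n * θ * (ε - ρstar)) * ∫ ω, φ n ω ∂μ := fun n => by
    rw [mul_assoc, exp_nat_mul]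
    exact hφ0.trans (le_pow_mul_of_le_mul_succ (exp_pos _).le hrec n)
  have hφ_le : ∀ n, ∫ ω, φ n ω ∂μ ≤ (∫ ω, exp (θ * S n ω) ∂μ) * hmax := fun n => by
    rw [← integral_mul_const]
    exact integral_mono_of_nonneg (ae_of_all _ fun ω => (mul_pos (exp_pos _) (hpos _)).le)
      ((hint' n).mul_const hmax)
      (ae_of_all _ fun ω => mul_le_mul_of_nonneg_left (hmax_ge _) (exp_pos _).le)
  obtain ⟨M, hM⟩ := hcb
  refine ⟨fun n _ => hbound n, ?_⟩
  rw [← neg_sub ε ρstar]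
  refine neg_le_liminf_log_div hθ (div_pos hmin_pos hmax_pos) (fun n => ?_)
    (integral_exp_mul_sum_le hθ.le fun k ω => (abs_le.1 (hM _ _ _)).2)
  rw [div_le_iff₀ hmax_pos, mul_assoc]
  exact (hbound n).trans (mul_le_mul_of_nonneg_left (hφ_le n) (exp_pos _).le)

/-- for a controlled process on a finite state space satisfying the
one-step conditional super-martingale inequality
`h*(X_n) ≤ e^{θ(ε−ρ*)} E[e^{θ c(X_n,A_n,B_n)} h*(X_{n+1}) | F_n]` with `h* > 0`, one has
`e^{nθ(ε−ρ*)} E_i[e^{θ Σ_{k<n} c} h*(X_n)] ≥ min_j h*(j)` for all `n ≥ 1`, and hence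
`liminf_n (1/(θn)) ln E[e^{θ Σ_{k<n} c}] ≥ ρ* − ε`. -/
theorem stmt_15 {E α β Ω : Type*} [Fintype E] [Nonempty E]
    {m0 : MeasurableSpace Ω} (μ : Measure Ω) [IsProbabilityMeasure μ]
    (F : ℕ → MeasurableSpace Ω) (hFle : ∀ n, F n ≤ m0) (hFmono : ∀ n, F n ≤ F (n + 1))
    (X : ℕ → Ω → E) (Aa : ℕ → Ω → α) (Bb : ℕ → Ω → β)
    (c : E → α → β → ℝ) (hcb : ∃ M : ℝ, ∀ i a b, |c i a b| ≤ M)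
    (hstar : E → ℝ) (hpos : ∀ i, 0 < hstar i)
    (θ ρstar ε : ℝ) (hθ : 0 < θ)
    (hint : ∀ n, Integrable (fun ω =>
      Real.exp (θ * ∑ k ∈ Finset.range n, c (X k ω) (Aa k ω) (Bb k ω)) * hstar (X n ω)) μ)
    (hint' : ∀ n, Integrable (fun ω =>
      Real.exp (θ * ∑ k ∈ Finset.range n, c (X k ω) (Aa k ω) (Bb k ω))) μ)
    (hadapt : ∀ n, Measurable[F n] (fun ω =>
      Real.exp (θ * ∑ k ∈ Finset.range n, c (X k ω) (Aa k ω) (Bb k ω)) * hstar (X n ω)))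
    (hstep : ∀ n, ∀ᵐ ω ∂μ, hstar (X n ω) ≤ Real.exp (θ * (ε - ρstar)) *
      (μ[(fun ω' => Real.exp (θ * c (X n ω') (Aa n ω') (Bb n ω')) *
          hstar (X (n + 1) ω')) | F n]) ω) :
    (∀ n : ℕ, 1 ≤ n →
      (Finset.univ.inf' Finset.univ_nonempty hstar) ≤
        Real.exp ((n : ℝ) * θ * (ε - ρstar)) *
          ∫ ω, Real.exp (θ * ∑ k ∈ Finset.range n, c (X k ω) (Aa k ω) (Bb k ω)) *
            hstar (X n ω) ∂μ) ∧
    ρstar - ε ≤ atTop.liminf (fun n : ℕ =>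
      (1 / (θ * n)) * Real.log
        (∫ ω, Real.exp (θ * ∑ k ∈ Finset.range n, c (X k ω) (Aa k ω) (Bb k ω)) ∂μ)) :=
  stmt_15_general μ F hFle X Aa Bb c hcb hstar hpos θ ρstar ε hθ hint hint' hadapt hstep
end
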